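/- arXiv:0809.0748 — 4 statements merged into one kernel-verified Lean document; each statement's English description precedes it below -/
import Mathlib

section
/- In a loop Q, the four Moufang identities ((xy)x)z = x(y(xz)), x(y(zy)) = ((xy)z)y, (xy)(zx) = x((yz)x), and (xy)(zx) = (x(yz))x are pairwise equivalent: if one of them holds for all x, y, z ∈ Q, then all of them hold. -/
/-- A loop: a quasigroup with a two-sided identity. -/
class Loop (Q : Type*) extends Mul Q, One Q where
  one_mul : ∀ x : Q, 1 * x = x
  mul_one : ∀ x : Q, x * 1 = x
  mulLeft_exu : ∀ a b : Q, ∃! x : Q, a * x = b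
  mulRight_exu : ∀ a b : Q, ∃! y : Q, y * a = b

/-!
Each Moufang identity forces flexibility, which makes the left inverse two-sided, and then the left
and right inverse properties, which make inversion an anti-automorphism. The two middle identities
differ only by flexibility. The left and the first middle identity each say that a certain triple of
translations is an autotopism `(α, β, γ)`, i.e. `α u * β v = γ (u * v)`; in a loop with the right
inverse property, `γ s * (β w⁻¹)⁻¹ = α (s * w)`, and this turns either autotopism into the other
identity. Finally, the right Moufang identity and the second middle one are the left Moufang identity
and the first middle one of the opposite loop.
-/

section Identities

variable (Q : Type*) [Mul Q]

def Flexible : Prop := ∀ x y : Q, (x * y) * x = x * (y * x)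

def LeftMoufang : Prop := ∀ x y z : Q, ((x * y) * x) * z = x * (y * (x * z))

def RightMoufang : Prop := ∀ x y z : Q, x * (y * (z * y)) = ((x * y) * z) * y

def MiddleMoufang₁ : Prop := ∀ x y z : Q, (x * y) * (z * x) = x * ((y * z) * x)

def MiddleMoufang₂ : Prop := ∀ x y z : Q, (x * y) * (z * x) = (x * (y * z)) * x

end Identities

namespace Loop

variable {Q : Type*} [Loop Q]

theorem mul_left_cancel {a x y : Q} (h : a * x = a * y) : x = y :=
  (mulLeft_exu a (a * y)).unique h rfl

theorem mul_right_cancel {a x y : Q} (h : x * a = y * a) : x = y :=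
  (mulRight_exu a (y * a)).unique h rfl

noncomputable def linv (x : Q) : Q := (mulRight_exu x 1).choose

theorem linv_mul (x : Q) : linv x * x = 1 := (mulRight_exu x 1).choose_spec.1

theorem mul_linv_of_flexible (hf : Flexible Q) (x : Q) : x * linv x = 1 := by
  refine mul_right_cancel (a := x) ?_
  rw [hf, linv_mul, Loop.mul_one, Loop.one_mul]

theorem linv_linv_of_flexible (hf : Flexible Q) (x : Q) : linv (linv x) = x :=
  mul_right_cancel ((linv_mul (linv x)).trans (mul_linv_of_flexible hf x).symm)

variable (Q) in
def LeftInverseProperty : Prop := ∀ x z : Q, linv x * (x * z) = z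

theorem mul_linv_mul_of_flexible (hf : Flexible Q) (hL : LeftInverseProperty Q) (x z : Q) :
    x * (linv x * z) = z := by
  simpa only [linv_linv_of_flexible hf] using hL (linv x) z

variable (Q) in
def RightInverseProperty : Prop := ∀ x z : Q, (z * x) * linv x = z

theorem linv_mul_rev (hL : LeftInverseProperty Q) (hR : RightInverseProperty Q) (x y : Q) :
    linv (x * y) = linv y * linv x := by
  have hx : (linv x * (x * y)) * linv (x * y) = linv x := hR (x * y) (linv x)
  rw [hL x y] at hx
  rw [← hx, hL]

def IsAutotopism (α β γ : Q → Q) : Prop := ∀ u v : Q, α u * β v = γ (u * v)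

namespace IsAutotopism

variable {α β γ : Q → Q}

theorem mul_linv (h : IsAutotopism α β γ) (hR : RightInverseProperty Q) (s w : Q) :
    γ s * linv (β (linv w)) = α (s * w) := by
  have hs : α (s * w) * β (linv w) = γ s := by rw [h, hR]
  rw [← hs, hR]

end IsAutotopism

end Loop

open Loop

namespace LeftMoufang

variable {Q : Type*} [Loop Q] (h : LeftMoufang Q)
include h

theorem flexible : Flexible Q := fun x y => by
  simpa only [Loop.mul_one] using h x y 1

theorem leftInverseProperty : LeftInverseProperty Q := fun x z => by
  have hx := h x (linv x) z
  rw [mul_linv_of_flexible h.flexible, Loop.one_mul] at hx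
  exact (mul_left_cancel hx).symm

theorem rightInverseProperty : RightInverseProperty Q := fun x z => by
  obtain ⟨y, rfl, -⟩ := mulLeft_exu x z
  rw [h, mul_linv_of_flexible h.flexible, Loop.mul_one]

theorem middleMoufang₂ : MiddleMoufang₂ Q := fun x y z => by
  have hf := h.flexible
  have hL := h.leftInverseProperty
  have hx : IsAutotopism (fun u => (x * u) * x) (fun v => linv x * v) (fun t => x * t) :=
    fun u v => by rw [h, mul_linv_mul_of_flexible hf hL]
  have := hx.mul_linv h.rightInverseProperty y z
  rwa [linv_mul_rev hL h.rightInverseProperty, linv_linv_of_flexible hf,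
    linv_linv_of_flexible hf] at this

end LeftMoufang

namespace MiddleMoufang₁

variable {Q : Type*} [Loop Q] (h : MiddleMoufang₁ Q)
include h

theorem flexible : Flexible Q := fun x y => by
  simpa only [Loop.mul_one, Loop.one_mul] using h x y 1

theorem rightInverseProperty : RightInverseProperty Q := fun x z => by
  have hx := h (linv x) z (linv (linv x))
  rw [linv_mul, Loop.mul_one, linv_linv_of_flexible h.flexible] at hx
  exact (mul_left_cancel hx).symm

theorem leftInverseProperty : LeftInverseProperty Q := fun x s => by
  obtain ⟨z, rfl, -⟩ := mulLeft_exu (linv x) s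
  have hx := h x (linv x) z
  rw [mul_linv_of_flexible h.flexible, Loop.one_mul, ← h.flexible] at hx
  rw [← mul_right_cancel hx]

theorem leftMoufang : LeftMoufang Q := fun x y z => by
  have hf := h.flexible
  have hL := h.leftInverseProperty
  have hR := h.rightInverseProperty
  have hx : IsAutotopism (x * ·) (· * x) (fun t => x * (t * x)) := h x
  have := hx.mul_linv hR y (x * z)
  rwa [linv_mul_rev hL hR, linv_linv_of_flexible hf, hL, ← hf] at this

theorem middleMoufang₂ : MiddleMoufang₂ Q := fun x y z => by
  rw [h, h.flexible]

end MiddleMoufang₁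

namespace MiddleMoufang₂

variable {Q : Type*} [Loop Q] (h : MiddleMoufang₂ Q)
include h

theorem flexible : Flexible Q := fun x y => by
  simpa only [Loop.mul_one, Loop.one_mul] using (h x 1 y).symm

theorem middleMoufang₁ : MiddleMoufang₁ Q := fun x y z => by
  rw [h, h.flexible]

end MiddleMoufang₂

section Duality

variable {Q : Type*} [Loop Q]

open MulOpposite

instance : Loop Qᵐᵒᵖ where
  one_mul x := unop_injective (Loop.mul_one x.unop)
  mul_one x := unop_injective (Loop.one_mul x.unop)
  mulLeft_exu a b :=
    have ⟨y, hy, huniq⟩ := mulRight_exu a.unop b.unop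
    ⟨op y, unop_injective hy, fun w hw => unop_injective (huniq w.unop (congrArg unop hw))⟩
  mulRight_exu a b :=
    have ⟨y, hy, huniq⟩ := mulLeft_exu a.unop b.unop
    ⟨op y, unop_injective hy, fun w hw => unop_injective (huniq w.unop (congrArg unop hw))⟩

theorem rightMoufang_iff_leftMoufang_op : RightMoufang Q ↔ LeftMoufang Qᵐᵒᵖ := by
  simp only [RightMoufang, LeftMoufang, op_surjective.forall, ← op_mul, op_inj]
  exact ⟨fun h x y z => h z x y, fun h x y z => h y z x⟩

theorem middleMoufang₂_iff_middleMoufang₁_op : MiddleMoufang₂ Q ↔ MiddleMoufang₁ Qᵐᵒᵖ := by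
  simp only [MiddleMoufang₂, MiddleMoufang₁, op_surjective.forall, ← op_mul, op_inj]
  exact ⟨fun h x y z => h x z y, fun h x y z => h x z y⟩

end Duality

theorem leftMoufang_iff_middleMoufang₁ {Q : Type*} [Loop Q] :
    LeftMoufang Q ↔ MiddleMoufang₁ Q :=
  ⟨fun h => h.middleMoufang₂.middleMoufang₁, MiddleMoufang₁.leftMoufang⟩

/-- In a loop, the four Moufang identities are pairwise equivalent. -/
theorem stmt4 (Q : Type*) [Loop Q] :
    [(∀ x y z : Q, ((x * y) * x) * z = x * (y * (x * z))),
     (∀ x y z : Q, x * (y * (z * y)) = ((x * y) * z) * y),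
     (∀ x y z : Q, (x * y) * (z * x) = x * ((y * z) * x)),
     (∀ x y z : Q, (x * y) * (z * x) = (x * (y * z)) * x)].TFAE := by
  tfae_have 1 ↔ 3 := leftMoufang_iff_middleMoufang₁
  tfae_have 3 ↔ 4 := ⟨MiddleMoufang₁.middleMoufang₂, MiddleMoufang₂.middleMoufang₁⟩
  tfae_have 2 ↔ 4 := rightMoufang_iff_leftMoufang_op.trans
    (leftMoufang_iff_middleMoufang₁.trans middleMoufang₂_iff_middleMoufang₁_op.symm)
  tfae_finish
end

section
/- Let F be a field. The set M of Zorn vector matrices over F with determinant 1, under Zorn's multiplication, is a Moufang loop: it is closed under the multiplication, has identity [[1,0],[0,1]], every element has a two-sided inverse, and the Moufang identity ((xy)x)z = x(y(xz)) holds for all x, y, z ∈ M. -/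
open Matrix

/-- A Zorn vector matrix `[[a, α], [β, b]]` over a field `F`. -/
structure ZornMatrix (F : Type*) [Field F] where
  a : F
  α : Fin 3 → F
  β : Fin 3 → F
  b : F

namespace ZornMatrix

variable {F : Type*} [Field F]

/-- Zorn's vector matrix multiplication. -/
def mul (M N : ZornMatrix F) : ZornMatrix F :=
  ⟨M.a * N.a + M.α ⬝ᵥ N.β,
   M.a • N.α + N.b • M.α - M.β ⨯₃ N.β,
   N.a • M.β + M.b • N.β + M.α ⨯₃ N.α,
   M.β ⬝ᵥ N.α + M.b * N.b⟩

/-- The determinant of a Zorn vector matrix. -/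
def det (M : ZornMatrix F) : F := M.a * M.b - M.α ⬝ᵥ M.β

/-- The identity Zorn vector matrix. -/
def id : ZornMatrix F := ⟨1, 0, 0, 1⟩

end ZornMatrix

/-! Zorn vector matrices are the split octonions and `det` is their norm form. The norm is
multiplicative, the conjugate `[[b, -α], [-β, a]]` satisfies `M M̄ = M̄ M = det M`, and the
Moufang identity holds since the split octonions are alternative. Each of these is a
polynomial identity in the coordinates, verified after expanding the products. -/

namespace ZornMatrix

variable {F : Type*} [Field F]

def scalar (c : F) : ZornMatrix F := ⟨c, 0, 0, c⟩

def conj (M : ZornMatrix F) : ZornMatrix F := ⟨M.b, -M.α, -M.β, M.a⟩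

lemma scalar_one : scalar (1 : F) = id := rfl

lemma ext_of_coords {M N : ZornMatrix F} (ha : M.a = N.a)
    (hα₀ : M.α 0 = N.α 0) (hα₁ : M.α 1 = N.α 1) (hα₂ : M.α 2 = N.α 2)
    (hβ₀ : M.β 0 = N.β 0) (hβ₁ : M.β 1 = N.β 1) (hβ₂ : M.β 2 = N.β 2)
    (hb : M.b = N.b) : M = N := by
  obtain ⟨a, α, β, b⟩ := M
  obtain ⟨a', α', β', b'⟩ := N
  congr
  all_goals first | assumption | (funext i; fin_cases i <;> assumption)

section Coordinates

variable (M N : ZornMatrix F)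

lemma a_mul : (mul M N).a = M.a * N.a + (M.α 0 * N.β 0 + M.α 1 * N.β 1 + M.α 2 * N.β 2) := by
  simp only [mul, vec3_dotProduct]

lemma b_mul : (mul M N).b = M.β 0 * N.α 0 + M.β 1 * N.α 1 + M.β 2 * N.α 2 + M.b * N.b := by
  simp only [mul, vec3_dotProduct]

lemma α_mul_zero :
    (mul M N).α 0 = M.a * N.α 0 + N.b * M.α 0 - (M.β 1 * N.β 2 - M.β 2 * N.β 1) := rfl

lemma α_mul_one :
    (mul M N).α 1 = M.a * N.α 1 + N.b * M.α 1 - (M.β 2 * N.β 0 - M.β 0 * N.β 2) := rfl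

lemma α_mul_two :
    (mul M N).α 2 = M.a * N.α 2 + N.b * M.α 2 - (M.β 0 * N.β 1 - M.β 1 * N.β 0) := rfl

lemma β_mul_zero :
    (mul M N).β 0 = N.a * M.β 0 + M.b * N.β 0 + (M.α 1 * N.α 2 - M.α 2 * N.α 1) := rfl

lemma β_mul_one :
    (mul M N).β 1 = N.a * M.β 1 + M.b * N.β 1 + (M.α 2 * N.α 0 - M.α 0 * N.α 2) := rfl

lemma β_mul_two :
    (mul M N).β 2 = N.a * M.β 2 + M.b * N.β 2 + (M.α 0 * N.α 1 - M.α 1 * N.α 0) := rfl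

end Coordinates

lemma det_mul (M N : ZornMatrix F) : (mul M N).det = M.det * N.det := by
  simp only [det, a_mul, b_mul, vec3_dotProduct, α_mul_zero, α_mul_one, α_mul_two,
    β_mul_zero, β_mul_one, β_mul_two]
  ring

lemma det_id : (id : ZornMatrix F).det = 1 := by
  simp [det, id]

lemma id_mul (M : ZornMatrix F) : mul id M = M := by
  refine ext_of_coords ?_ ?_ ?_ ?_ ?_ ?_ ?_ ?_ <;>
    simp [id, a_mul, b_mul, α_mul_zero, α_mul_one, α_mul_two, β_mul_zero, β_mul_one, β_mul_two]

lemma mul_id (M : ZornMatrix F) : mul M id = M := by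
  refine ext_of_coords ?_ ?_ ?_ ?_ ?_ ?_ ?_ ?_ <;>
    simp [id, a_mul, b_mul, α_mul_zero, α_mul_one, α_mul_two, β_mul_zero, β_mul_one, β_mul_two]

lemma det_conj (M : ZornMatrix F) : M.conj.det = M.det := by
  simp only [det, conj, neg_dotProduct, dotProduct_neg, neg_neg, dotProduct_comm M.α, mul_comm M.a]

lemma mul_conj (M : ZornMatrix F) : mul M M.conj = scalar M.det := by
  refine ext_of_coords ?_ ?_ ?_ ?_ ?_ ?_ ?_ ?_ <;>
    simp only [conj, scalar, det, vec3_dotProduct, Pi.neg_apply, Pi.zero_apply, a_mul, b_mul,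
      α_mul_zero, α_mul_one, α_mul_two, β_mul_zero, β_mul_one, β_mul_two] <;>
    ring

lemma conj_mul (M : ZornMatrix F) : mul M.conj M = scalar M.det := by
  refine ext_of_coords ?_ ?_ ?_ ?_ ?_ ?_ ?_ ?_ <;>
    simp only [conj, scalar, det, vec3_dotProduct, Pi.neg_apply, Pi.zero_apply, a_mul, b_mul,
      α_mul_zero, α_mul_one, α_mul_two, β_mul_zero, β_mul_one, β_mul_two] <;>
    ring

lemma moufang (x y z : ZornMatrix F) :
    mul (mul (mul x y) x) z = mul x (mul y (mul x z)) := by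
  refine ext_of_coords ?_ ?_ ?_ ?_ ?_ ?_ ?_ ?_ <;>
    simp only [a_mul, b_mul, α_mul_zero, α_mul_one, α_mul_two, β_mul_zero, β_mul_one,
      β_mul_two] <;>
    ring

end ZornMatrix

/-- The determinant-one Zorn vector matrices form a Moufang loop under Zorn's
multiplication: closure, identity, two-sided inverses, and the Moufang identity. -/
theorem stmt6 {F : Type*} [Field F] :
    (∀ M N : ZornMatrix F, M.det = 1 → N.det = 1 → (ZornMatrix.mul M N).det = 1) ∧
    (ZornMatrix.id : ZornMatrix F).det = 1 ∧
    (∀ M : ZornMatrix F, ZornMatrix.mul ZornMatrix.id M = M ∧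
      ZornMatrix.mul M ZornMatrix.id = M) ∧
    (∀ M : ZornMatrix F, M.det = 1 → ∃ N : ZornMatrix F, N.det = 1 ∧
      ZornMatrix.mul M N = ZornMatrix.id ∧ ZornMatrix.mul N M = ZornMatrix.id) ∧
    (∀ x y z : ZornMatrix F, x.det = 1 → y.det = 1 → z.det = 1 →
      ZornMatrix.mul (ZornMatrix.mul (ZornMatrix.mul x y) x) z =
        ZornMatrix.mul x (ZornMatrix.mul y (ZornMatrix.mul x z))) := by
  refine ⟨fun M N hM hN => by rw [ZornMatrix.det_mul, hM, hN, one_mul], ZornMatrix.det_id,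
    fun M => ⟨ZornMatrix.id_mul M, ZornMatrix.mul_id M⟩,
    fun M hM => ⟨M.conj, ?_, ?_, ?_⟩, fun x y z _ _ _ => ZornMatrix.moufang x y z⟩
  · rw [ZornMatrix.det_conj, hM]
  · rw [ZornMatrix.mul_conj, hM, ZornMatrix.scalar_one]
  · rw [ZornMatrix.conj_mul, hM, ZornMatrix.scalar_one]
end

section
/- Let F be a field. The multiplication of Zorn vector matrices over F is not associative when F has more than one element; in particular the loop M of determinant-1 Zorn matrices over the field with q elements (q ≥ 2) is a non-associative Moufang loop. -/
open Matrix

/-! For the unipotent Zorn matrices `[[1, u], [0, 1]]` the top-left entry of `(xy)z` is `1`,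
while that of `x(yz)` is `1 + u ⬝ᵥ (v ⨯₃ w)`; the triple product of the standard basis is `1`. -/

namespace ZornMatrix

variable {F : Type*} [Field F]

def unipotent (v : Fin 3 → F) : ZornMatrix F := ⟨1, v, 0, 1⟩

theorem det_unipotent (v : Fin 3 → F) : (unipotent v).det = 1 := by
  simp [det, unipotent]

theorem mul_unipotent_unipotent (u v : Fin 3 → F) :
    mul (unipotent u) (unipotent v) = ⟨1, u + v, u ⨯₃ v, 1⟩ := by
  simp [mul, unipotent, add_comm]

theorem a_mul_mul_unipotent (u v w : Fin 3 → F) :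
    (mul (mul (unipotent u) (unipotent v)) (unipotent w)).a = 1 := by
  rw [mul_unipotent_unipotent]
  simp [mul, unipotent]

theorem a_mul_unipotent_mul (u v w : Fin 3 → F) :
    (mul (unipotent u) (mul (unipotent v) (unipotent w))).a = 1 + u ⬝ᵥ (v ⨯₃ w) := by
  rw [mul_unipotent_unipotent]
  simp [mul, unipotent]

theorem mul_mul_unipotent_ne {u v w : Fin 3 → F} (h : u ⬝ᵥ (v ⨯₃ w) ≠ 0) :
    mul (mul (unipotent u) (unipotent v)) (unipotent w) ≠
      mul (unipotent u) (mul (unipotent v) (unipotent w)) := by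
  intro hassoc
  have ha := congrArg a hassoc
  rw [a_mul_mul_unipotent, a_mul_unipotent_mul, left_eq_add] at ha
  exact h ha

end ZornMatrix

/-- Zorn's multiplication is not associative: over any field there exist
determinant-one Zorn vector matrices `x, y, z` with `(xy)z ≠ x(yz)`; in particular the
loop of determinant-one Zorn matrices over a finite field is a non-associative loop. -/
theorem stmt7 {F : Type*} [Field F] :
    ∃ x y z : ZornMatrix F, x.det = 1 ∧ y.det = 1 ∧ z.det = 1 ∧
      ZornMatrix.mul (ZornMatrix.mul x y) z ≠ ZornMatrix.mul x (ZornMatrix.mul y z) := by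
  have htriple : (![1, 0, 0] : Fin 3 → F) ⬝ᵥ (![0, 1, 0] ⨯₃ ![0, 0, 1]) = 1 := by
    simp [cross_apply]
  exact ⟨.unipotent ![1, 0, 0], .unipotent ![0, 1, 0], .unipotent ![0, 0, 1],
    ZornMatrix.det_unipotent _, ZornMatrix.det_unipotent _, ZornMatrix.det_unipotent _,
    ZornMatrix.mul_mul_unipotent_ne (by rw [htriple]; exact one_ne_zero)⟩
end

section
/- Let F_q be a finite field and let L be the loop of Zorn vector matrices over F_q with nonzero determinant. The center of L is Z(L) = { [[a,0],[0,a]] : a ∈ F_q, a ≠ 0 }, which is isomorphic to the multiplicative group of F_q. -/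
open Matrix

/-!
Multiplication by a scalar matrix `[[c, 0], [0, c]]` from either side is scalar
multiplication by `c`, and Zorn multiplication is bilinear, so nonzero scalar matrices commute
and associate with everything. Conversely, an element commuting with the invertible matrices
`[[1, eᵢ], [0, 1]]` and `[[0, eᵢ], [eᵢ, 0]]` has `β = 0`, `α = 0` and `a = b`, so it is scalar.
-/

namespace ZornMatrix

variable {F : Type*} [Field F]

attribute [ext] ZornMatrix

instance : SMul F (ZornMatrix F) := ⟨fun c M => ⟨c * M.a, c • M.α, c • M.β, c * M.b⟩⟩

@[simp] lemma smul_a (c : F) (M : ZornMatrix F) : (c • M).a = c * M.a := rfl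
@[simp] lemma smul_α (c : F) (M : ZornMatrix F) : (c • M).α = c • M.α := rfl
@[simp] lemma smul_β (c : F) (M : ZornMatrix F) : (c • M).β = c • M.β := rfl
@[simp] lemma smul_b (c : F) (M : ZornMatrix F) : (c • M).b = c * M.b := rfl

lemma det_scalar (c : F) : det ⟨c, 0, 0, c⟩ = c * c := by
  simp [det]

lemma scalar_mul (c : F) (M : ZornMatrix F) : mul ⟨c, 0, 0, c⟩ M = c • M := by
  ext <;> simp [mul]

lemma mul_scalar (c : F) (M : ZornMatrix F) : mul M ⟨c, 0, 0, c⟩ = c • M := by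
  ext <;> simp [mul, mul_comm]

lemma smul_mul (c : F) (M N : ZornMatrix F) : mul (c • M) N = c • mul M N := by
  ext : 1 <;> simp only [mul, smul_a, smul_α, smul_β, smul_b, smul_dotProduct, map_smul,
    LinearMap.smul_apply, smul_eq_mul]
  · ring
  · module
  · module
  · ring

lemma mul_smul (c : F) (M N : ZornMatrix F) : mul M (c • N) = c • mul M N := by
  ext : 1 <;> simp only [mul, smul_a, smul_α, smul_β, smul_b, dotProduct_smul, map_smul,
    smul_eq_mul]
  · ring
  · module
  · module
  · ring

section Commute

variable {z : ZornMatrix F}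

lemma β_eq_zero_of_commute
    (hz : ∀ x : ZornMatrix F, x.det ≠ 0 → mul z x = mul x z) : z.β = 0 := by
  funext i
  have h := congrArg b (hz ⟨1, Pi.single i 1, 0, 1⟩ (by simp [det]))
  simpa [mul] using h

lemma α_eq_zero_of_commute
    (hz : ∀ x : ZornMatrix F, x.det ≠ 0 → mul z x = mul x z) : z.α = 0 := by
  funext i
  have hdet : det (⟨0, Pi.single i 1, Pi.single i 1, 0⟩ : ZornMatrix F) ≠ 0 := by
    simp [det]
  have h := congrArg a (hz _ hdet)
  simpa [mul, β_eq_zero_of_commute hz] using h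

lemma a_eq_b_of_commute
    (hz : ∀ x : ZornMatrix F, x.det ≠ 0 → mul z x = mul x z) : z.a = z.b := by
  have h := congrArg α (hz ⟨1, Pi.single 0 1, 0, 1⟩ (by simp [det]))
  simpa [mul, α_eq_zero_of_commute hz, β_eq_zero_of_commute hz] using h

lemma eq_scalar_of_commute
    (hz : ∀ x : ZornMatrix F, x.det ≠ 0 → mul z x = mul x z) : z = ⟨z.a, 0, 0, z.a⟩ :=
  ZornMatrix.ext rfl (α_eq_zero_of_commute hz) (β_eq_zero_of_commute hz)
    (a_eq_b_of_commute hz).symm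

end Commute

def unitsEquivScalars : Fˣ ≃ {z : ZornMatrix F | ∃ c : F, c ≠ 0 ∧ z = ⟨c, 0, 0, c⟩} where
  toFun c := ⟨⟨c, 0, 0, c⟩, c, c.ne_zero, rfl⟩
  invFun z := Units.mk0 z.1.a (by obtain ⟨c, hc, hz⟩ := z.2; rwa [hz])
  left_inv c := by simp
  right_inv z := by
    obtain ⟨c, -, hz⟩ := z.2
    exact Subtype.ext (by simp [hz])

lemma unitsEquivScalars_mul (c d : Fˣ) :
    (unitsEquivScalars (c * d) : ZornMatrix F) =
      mul (unitsEquivScalars c) (unitsEquivScalars d) := by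
  ext <;> simp [unitsEquivScalars, scalar_mul]

end ZornMatrix

open ZornMatrix in
theorem stmt8_general {F : Type*} [Field F] :
    ({z : ZornMatrix F | z.det ≠ 0 ∧
        (∀ x : ZornMatrix F, x.det ≠ 0 → mul z x = mul x z) ∧
        (∀ x y : ZornMatrix F, x.det ≠ 0 → y.det ≠ 0 →
          mul z (mul x y) = mul (mul z x) y ∧
          mul x (mul z y) = mul (mul x z) y ∧
          mul (mul x y) z = mul x (mul y z))} =
      {z : ZornMatrix F | ∃ a : F, a ≠ 0 ∧ z = ⟨a, 0, 0, a⟩}) ∧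
    ∃ e : Fˣ ≃ {z : ZornMatrix F | ∃ a : F, a ≠ 0 ∧ z = ⟨a, 0, 0, a⟩},
      ∀ a b : Fˣ, (e (a * b) : ZornMatrix F) = mul (e a : ZornMatrix F) (e b : ZornMatrix F) := by
  refine ⟨Set.ext fun z => ⟨?_, ?_⟩, ?_⟩
  · rintro ⟨hdet, hcomm, -⟩
    have hz := eq_scalar_of_commute hcomm
    refine ⟨z.a, fun h0 => hdet ?_, hz⟩
    rw [hz, det_scalar, h0, zero_mul]
  · rintro ⟨c, hc, rfl⟩
    refine ⟨by rw [det_scalar]; exact mul_ne_zero hc hc,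
      fun x _ => by rw [scalar_mul, mul_scalar], fun x y _ _ => ⟨?_, ?_, ?_⟩⟩
    · rw [scalar_mul, scalar_mul, ZornMatrix.smul_mul]
    · rw [scalar_mul, mul_scalar, ZornMatrix.mul_smul, ZornMatrix.smul_mul]
    · rw [mul_scalar, mul_scalar, ZornMatrix.mul_smul]
  · exact ⟨unitsEquivScalars, unitsEquivScalars_mul⟩

open ZornMatrix in
/-- The center of the loop `L` of Zorn vector matrices with nonzero determinant over a
finite field consists exactly of the nonzero scalar matrices, and is isomorphic to the
multiplicative group of the field. -/
theorem stmt8 {F : Type*} [Field F] [Fintype F] :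
    ({z : ZornMatrix F | z.det ≠ 0 ∧
        (∀ x : ZornMatrix F, x.det ≠ 0 → mul z x = mul x z) ∧
        (∀ x y : ZornMatrix F, x.det ≠ 0 → y.det ≠ 0 →
          mul z (mul x y) = mul (mul z x) y ∧
          mul x (mul z y) = mul (mul x z) y ∧
          mul (mul x y) z = mul x (mul y z))} =
      {z : ZornMatrix F | ∃ a : F, a ≠ 0 ∧ z = ⟨a, 0, 0, a⟩}) ∧
    ∃ e : Fˣ ≃ {z : ZornMatrix F | ∃ a : F, a ≠ 0 ∧ z = ⟨a, 0, 0, a⟩},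
      ∀ a b : Fˣ, (e (a * b) : ZornMatrix F) = mul (e a : ZornMatrix F) (e b : ZornMatrix F) :=
  stmt8_general
end
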